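/- Let T > 0, let S be a nonempty set, and let α₀, ξ₀ : S → ℝ be functions for which there exist constants M₀ < 0 and N₀ > 0 with α₀(x) ≤ M₀ and 0 < ξ₀(x) ≤ N₀ for all x ∈ S. Define α(x,t) = α₀(x)/√(t(T−t)) and ξ(x,t) = ξ₀(x)/√(t(T−t)) for x ∈ S and t ∈ (0,T). Then for every s ≥ 4T/|M₀| and every x ∈ S, t ∈ (0,T), one has s¹⁶ ξ(x,t)¹⁶ e^{2sα(x,t)} ≤ 2⁴⁸ (N₀/(M₀ e))¹⁶. -/

import Mathlib

/-- Key: `z^16 e^{-az} ≤ (16/(ae))^16` for `a > 0`, `z ≥ 0`. -/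
lemma carleman_key (a z : ℝ) (ha : 0 < a) (hz : 0 ≤ z) :
    z ^ 16 * Real.exp (-(a * z)) ≤ (16 / (a * Real.exp 1)) ^ 16 := by
  have hx : a * z / 16 ≤ Real.exp (a * z / 16 - 1) := by
    have := Real.add_one_le_exp (a * z / 16 - 1); linarith
  have h1 : (a * z / 16) ^ 16 ≤ Real.exp (a * z - 16) := by
    calc (a * z / 16) ^ 16 ≤ Real.exp (a * z / 16 - 1) ^ 16 :=
          pow_le_pow_left₀ (by positivity) hx 16
      _ = Real.exp (a * z - 16) := by
          rw [← Real.exp_nat_mul]; ring_nf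
  have hz16 : z ^ 16 ≤ (16 / a) ^ 16 * Real.exp (a * z - 16) := by
    have : z ^ 16 = (16 / a) ^ 16 * (a * z / 16) ^ 16 := by
      field_simp
    rw [this]
    exact mul_le_mul_of_nonneg_left h1 (by positivity)
  calc z ^ 16 * Real.exp (-(a * z))
      ≤ (16 / a) ^ 16 * Real.exp (a * z - 16) * Real.exp (-(a * z)) :=
        mul_le_mul_of_nonneg_right hz16 (Real.exp_pos _).le
    _ = (16 / a) ^ 16 * Real.exp (-16) := by
        rw [mul_assoc, ← Real.exp_add]; ring_nf
    _ = (16 / (a * Real.exp 1)) ^ 16 := by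
        have : Real.exp (-16) = (Real.exp 1)⁻¹ ^ 16 := by
          rw [show ((Real.exp 1)⁻¹ : ℝ) = Real.exp (-1) by rw [Real.exp_neg],
            ← Real.exp_nat_mul]
          norm_num
        rw [this, div_pow, div_pow, mul_pow]
        field_simp
  
/-- Lemma 2.3(1): uniform upper bound for the Carleman weight `s¹⁶ ξ¹⁶ e^{2sα}`. -/
theorem carleman_weight_upper_bound
    {S : Type*} [Nonempty S] (T M₀ N₀ : ℝ) (hT : 0 < T)
    (α₀ ξ₀ : S → ℝ) (hM₀ : M₀ < 0) (hN₀ : 0 < N₀)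
    (hα₀ : ∀ x, α₀ x ≤ M₀) (hξ₀pos : ∀ x, 0 < ξ₀ x) (hξ₀ : ∀ x, ξ₀ x ≤ N₀) :
    ∀ s : ℝ, 4 * T / |M₀| ≤ s → ∀ x : S, ∀ t ∈ Set.Ioo (0 : ℝ) T,
      s ^ 16 * (ξ₀ x / Real.sqrt (t * (T - t))) ^ 16 *
        Real.exp (2 * s * (α₀ x / Real.sqrt (t * (T - t)))) ≤
      2 ^ 48 * (N₀ / (M₀ * Real.exp 1)) ^ 16 := by
  intro s hs x t ht
  obtain ⟨ht0, htT⟩ := ht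
  have hM : (0:ℝ) < -M₀ := by linarith
  have hs0 : 0 < s :=
    lt_of_lt_of_le (div_pos (by linarith) (abs_pos.mpr hM₀.ne)) hs
  have hprod : 0 < t * (T - t) := mul_pos ht0 (by linarith)
  set r := Real.sqrt (t * (T - t)) with hr
  have hrpos : 0 < r := Real.sqrt_pos.mpr hprod
  have hz : 0 ≤ s / r := (div_pos hs0 hrpos).le
  have key := carleman_key (2 * (-M₀)) (s / r) (by linarith) hz
  -- bound left factor
  have h1 : s ^ 16 * (ξ₀ x / r) ^ 16 ≤ N₀ ^ 16 * (s / r) ^ 16 := by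
    have e1 : s ^ 16 * (ξ₀ x / r) ^ 16 = (s * ξ₀ x / r) ^ 16 := by
      rw [← mul_pow]; ring_nf
    have e2 : N₀ ^ 16 * (s / r) ^ 16 = (N₀ * s / r) ^ 16 := by
      rw [← mul_pow]; ring_nf
    rw [e1, e2]
    apply pow_le_pow_left₀
    · have := (hξ₀pos x).le; positivity
    · apply div_le_div_of_nonneg_right _ hrpos.le
      nlinarith [hξ₀ x, (hξ₀pos x).le]
  -- bound exponential
  have h2 : Real.exp (2 * s * (α₀ x / r)) ≤ Real.exp (-(2 * (-M₀) * (s / r))) := by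
    apply Real.exp_le_exp.mpr
    have h := mul_le_mul_of_nonneg_left
      (div_le_div_of_nonneg_right (hα₀ x) hrpos.le) (by positivity : (0:ℝ) ≤ 2 * s)
    have heq : -(2 * -M₀ * (s / r)) = 2 * s * (M₀ / r) := by ring
    rw [heq]; linarith [h]
  have hmain : s ^ 16 * (ξ₀ x / r) ^ 16 * Real.exp (2 * s * (α₀ x / r)) ≤
      N₀ ^ 16 * ((s / r) ^ 16 * Real.exp (-(2 * (-M₀) * (s / r)))) := by
    calc s ^ 16 * (ξ₀ x / r) ^ 16 * Real.exp (2 * s * (α₀ x / r))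
        ≤ N₀ ^ 16 * (s / r) ^ 16 * Real.exp (-(2 * (-M₀) * (s / r))) := by
          apply mul_le_mul h1 h2 (Real.exp_pos _).le (by positivity)
      _ = N₀ ^ 16 * ((s / r) ^ 16 * Real.exp (-(2 * (-M₀) * (s / r)))) := by ring
  refine hmain.trans ?_
  have hfin : N₀ ^ 16 * (16 / (2 * (-M₀) * Real.exp 1)) ^ 16 =
      2 ^ 48 * (N₀ / (M₀ * Real.exp 1)) ^ 16 := by
    have he : (0:ℝ) < Real.exp 1 := Real.exp_pos 1
    rw [div_pow, div_pow]
    rw [show ((2:ℝ) * -M₀ * Real.exp 1) ^ 16 = 2 ^ 16 * (M₀ * Real.exp 1) ^ 16 by ring]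
    field_simp
    ring
  rw [← hfin]
  exact mul_le_mul_of_nonneg_left key (by positivity)
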